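/- Fix d ≥ 2. There exist constants C(d) and r₀(d) depending only on d with the following property. Let K̄ be an algebraically closed field, m ≥ 1, r ≥ r₀(d), and set n := ⌈4(r + m^{2/d})⌉ (so that n^d > m² + r(n^{d−1}+n)). Then for every choice of proper nonempty subsets I₁,…,I_r of [d], there exists a nonzero polynomial F of degree D, with coefficients in the prime field of K̄ and log₂ D ≤ C(d)·log₂(r+m), in the standard coordinates on ((K̄ⁿ)^{⊗d})^m, such that F vanishes at every tuple of the form g·(t₁,…,t_{m−1}, Σ_{i=1}^r a_i ⊗ b_i), where g ∈ K̄^{m×m}, t₁,…,t_{m−1} ∈ (K̄ⁿ)^{⊗d}, a_i ∈ (K̄ⁿ)^{⊗I_i}, b_i ∈ (K̄ⁿ)^{⊗I_i^c}, and where g· means taking, in the j-th position, the linear combination of the m listed tensors with coefficients given by the j-th row of g. -/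

import Mathlib

set_option linter.unusedSectionVars false

open PiTensorProduct
open scoped TensorProduct

section PartitionRank

variable (F : Type*) [Field F] {d : ℕ} (W : Fin d → Type*)
  [∀ i, AddCommGroup (W i)] [∀ i, Module F (W i)]

/-- Combine a family indexed by `I` and a family indexed by the complement of `I`
into a family indexed by `Fin d`. -/
def combineVec (I : Finset (Fin d)) (v : ∀ i : {x : Fin d // x ∈ I}, W i)
    (w : ∀ i : {x : Fin d // x ∉ I}, W i) : ∀ i, W i :=
  fun i => if h : i ∈ I then v ⟨i, h⟩ else w ⟨i, h⟩

theorem combineVec_update_right (I : Finset (Fin d)) {instd : DecidableEq (Fin d)}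
    {insts : DecidableEq {x : Fin d // x ∉ I}} (v : ∀ i : {x : Fin d // x ∈ I}, W i)
    (w : ∀ i : {x : Fin d // x ∉ I}, W i) (j : {x : Fin d // x ∉ I}) (x : W j) :
    combineVec W I v (Function.update w j x) =
      Function.update (combineVec W I v w) (j : Fin d) x := by
  obtain ⟨jv, hj⟩ := j
  funext i
  rcases eq_or_ne i jv with rfl | hij
  · simp [combineVec, hj]
  · rw [Function.update_of_ne hij]
    by_cases h : i ∈ I
    · simp [combineVec, h]
    · have hne : (⟨i, h⟩ : {x : Fin d // x ∉ I}) ≠ ⟨jv, hj⟩ := by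
        simpa [Subtype.ext_iff] using hij
      simp [combineVec, h, Function.update_of_ne hne]

theorem combineVec_update_left (I : Finset (Fin d)) {instd : DecidableEq (Fin d)}
    {insts : DecidableEq {x : Fin d // x ∈ I}} (v : ∀ i : {x : Fin d // x ∈ I}, W i)
    (w : ∀ i : {x : Fin d // x ∉ I}, W i) (j : {x : Fin d // x ∈ I}) (x : W j) :
    combineVec W I (Function.update v j x) w =
      Function.update (combineVec W I v w) (j : Fin d) x := by
  obtain ⟨jv, hj⟩ := j
  funext i
  rcases eq_or_ne i jv with rfl | hij
  · simp [combineVec, hj]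
  · rw [Function.update_of_ne hij]
    by_cases h : i ∈ I
    · have hne : (⟨i, h⟩ : {x : Fin d // x ∈ I}) ≠ ⟨jv, hj⟩ := by
        simpa [Subtype.ext_iff] using hij
      simp [combineVec, h, Function.update_of_ne hne]
    · simp [combineVec, h]

/-- The inner multilinear map used to define the partition multiplication. -/
noncomputable def partMulInner (I : Finset (Fin d))
    (v : ∀ i : {x : Fin d // x ∈ I}, W i) :
    MultilinearMap F (fun i : {x : Fin d // x ∉ I} => W i) (⨂[F] i, W i) where
  toFun w := tprod F (combineVec W I v w)
  map_update_add' w j x y := by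
    simp only [combineVec_update_right, MultilinearMap.map_update_add]
  map_update_smul' w j c x := by
    simp only [combineVec_update_right, MultilinearMap.map_update_smul]

/-- The outer multilinear map used to define the partition multiplication. -/
noncomputable def partMulOuter (I : Finset (Fin d)) :
    MultilinearMap F (fun i : {x : Fin d // x ∈ I} => W i)
      ((⨂[F] i : {x : Fin d // x ∉ I}, W i) →ₗ[F] ⨂[F] i, W i) where
  toFun v := PiTensorProduct.lift (partMulInner F W I v)
  map_update_add' v j x y := by
    ext w
    simp [partMulInner, combineVec_update_left, MultilinearMap.map_update_add]
  map_update_smul' v j c x := by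
    ext w
    simp [partMulInner, combineVec_update_left, MultilinearMap.map_update_smul]

/-- The canonical bilinear "partition multiplication"
`V_I ⊗ V_{I^c} → V₁ ⊗ ⋯ ⊗ V_d` realising the canonical isomorphism on pairs. -/
noncomputable def partMul (I : Finset (Fin d)) :
    (⨂[F] i : {x : Fin d // x ∈ I}, W i) →ₗ[F]
      (⨂[F] i : {x : Fin d // x ∉ I}, W i) →ₗ[F] ⨂[F] i, W i :=
  PiTensorProduct.lift (partMulOuter F W I)

/-- Witnesses "partition rank at most `r`": a decomposition `t = Σ_{k=1}^r a_k ⊗ b_k`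
with `a_k ∈ V_{I_k}`, `b_k ∈ V_{I_k^c}` for proper nonempty subsets `I_k ⊂ [d]`. -/
def PrkDecomp (t : ⨂[F] i, W i) (r : ℕ) : Prop :=
  ∃ I : Fin r → Finset (Fin d),
    (∀ k, (I k).Nonempty ∧ I k ≠ Finset.univ) ∧
    ∃ (a : ∀ k, ⨂[F] i : {x : Fin d // x ∈ I k}, W i)
      (b : ∀ k, ⨂[F] i : {x : Fin d // x ∉ I k}, W i),
      t = ∑ k, partMul F W (I k) (a k) (b k)

/-- The partition rank of a tensor. -/
noncomputable def prk (t : ⨂[F] i, W i) : ℕ :=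
  sInf {r | PrkDecomp F W t r}

/-- Witnesses "collective partition rank at most `r`" for a tuple of tensors: some
nonzero linear combination has partition rank at most `r`. -/
def CollectivePrkDecomp {m : ℕ} (t : Fin m → ⨂[F] i, W i) (r : ℕ) : Prop :=
  ∃ c : Fin m → F, c ≠ 0 ∧ PrkDecomp F W (∑ ℓ, c ℓ • t ℓ) r

/-- The collective partition rank of a tuple of tensors. -/
noncomputable def collectivePrk {m : ℕ} (t : Fin m → ⨂[F] i, W i) : ℕ :=
  sInf {r | CollectivePrkDecomp F W t r}

end PartitionRank

section BaseChange

variable (K L : Type*) [Field K] [Field L] [Algebra K L]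
variable {d : ℕ} (W : Fin d → Type*) [∀ i, AddCommGroup (W i)] [∀ i, Module K (W i)]

/-- The canonical `K`-linear map `V₁ ⊗ ⋯ ⊗ V_d → (L ⊗ V₁) ⊗_L ⋯ ⊗_L (L ⊗ V_d)`. -/
noncomputable def tensorBaseChange :
    (⨂[K] i, W i) →ₗ[K] ⨂[L] i, (L ⊗[K] W i) :=
  PiTensorProduct.lift
    (((PiTensorProduct.tprod L (s := fun i => L ⊗[K] W i)).restrictScalars K).compLinearMap
      (fun i => TensorProduct.mk K L (W i) 1))

end BaseChange
section Border

/-- `x` lies in the Zariski closure of `S`: every polynomial function (pulled back along any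
linear map to a coordinate space) that vanishes on `S` vanishes at `x`. -/
def MemZariskiClosure (F : Type*) [CommSemiring F] {W : Type*} [AddCommMonoid W] [Module F W]
    (S : Set W) (x : W) : Prop :=
  ∀ (N : ℕ) (φ : W →ₗ[F] (Fin N → F)) (P : MvPolynomial (Fin N) F),
    (∀ s ∈ S, MvPolynomial.eval (φ s) P = 0) → MvPolynomial.eval (φ x) P = 0

variable (K : Type*) [Field K] {d : ℕ} (W : Fin d → Type*)
  [∀ i, AddCommGroup (W i)] [∀ i, Module K (W i)]

/-- The border partition rank of a tensor: the minimal `r` such that the tensor, viewed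
over the algebraic closure, lies in the Zariski closure of the tensors of partition rank
at most `r`. -/
noncomputable def borderPrk (t : ⨂[K] i, W i) : ℕ :=
  sInf {r | MemZariskiClosure (AlgebraicClosure K)
    {s : ⨂[AlgebraicClosure K] i, (AlgebraicClosure K ⊗[K] W i) |
      PrkDecomp (AlgebraicClosure K) (fun i => AlgebraicClosure K ⊗[K] W i) s r}
    (tensorBaseChange K (AlgebraicClosure K) W t)}

/-- The border collective partition rank of an `m`-tuple of tensors. -/
noncomputable def borderCollectivePrk {m : ℕ} (t : Fin m → ⨂[K] i, W i) : ℕ :=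
  sInf {r | MemZariskiClosure (AlgebraicClosure K)
    {s : Fin m → ⨂[AlgebraicClosure K] i, (AlgebraicClosure K ⊗[K] W i) |
      CollectivePrkDecomp (AlgebraicClosure K) (fun i => AlgebraicClosure K ⊗[K] W i) s r}
    (fun ℓ => tensorBaseChange K (AlgebraicClosure K) W (t ℓ))}

end Border

section PiIota

variable (K : Type*) [Field K] {n : ℕ} {V : Type*} [AddCommGroup V] [Module K V]

/-- The linear form in `K[x₁,…,xₙ]` associated to a vector of `V` via a basis. -/
noncomputable def linearFormOf (b : Module.Basis (Fin n) K V) : V →ₗ[K] MvPolynomial (Fin n) K :=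
  (Finsupp.linearCombination K fun j => (MvPolynomial.X j : MvPolynomial (Fin n) K)) ∘ₗ
    b.repr.toLinearMap

/-- The multiplication map `π : V^{⊗d} → S^d V`, `v₁ ⊗ ⋯ ⊗ v_d ↦ v₁⋯v_d`, where `S^d V` is
realised as the space of degree-`d` forms in `K[x₁,…,xₙ]` via the basis `b`. -/
noncomputable def tensorToPoly (b : Module.Basis (Fin n) K V) (d : ℕ) :
    (⨂[K] _ : Fin d, V) →ₗ[K] MvPolynomial (Fin n) K :=
  PiTensorProduct.lift
    ((MultilinearMap.mkPiAlgebra K (Fin d) (MvPolynomial (Fin n) K)).compLinearMap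
      (fun _ => linearFormOf K b))

/-- The symmetrisation map `ι : S^d V → V^{⊗d}`,
`v₁⋯v_d ↦ Σ_{σ ∈ S_d} v_{σ(1)} ⊗ ⋯ ⊗ v_{σ(d)}`, where `S^d V` is realised as the space of
degree-`d` forms in `K[x₁,…,xₙ]` via the basis `b`. -/
noncomputable def polyToTensor (b : Module.Basis (Fin n) K V) (d : ℕ) :
    MvPolynomial (Fin n) K →ₗ[K] ⨂[K] _ : Fin d, V :=
  ∑ w : Fin d → Fin n,
    (∏ j : Fin n, Nat.factorial ((∑ i : Fin d, Finsupp.single (w i) 1 : Fin n →₀ ℕ) j)) •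
      ((LinearMap.toSpanSingleton K _ (PiTensorProduct.tprod K fun i => b (w i))) ∘ₗ
        (MvPolynomial.lcoeff K (∑ i : Fin d, Finsupp.single (w i) 1)))

end PiIota

section Coords

variable (F : Type*) [Field F]

/-- The standard coordinate on `(Fⁿ)^{⊗d}` indexed by the word `w`, i.e. the coefficient
of the basis vector `e_{w 0} ⊗ ⋯ ⊗ e_{w (d-1)}`. -/
noncomputable def stdCoord (d n : ℕ) (w : Fin d → Fin n) :
    (⨂[F] _ : Fin d, (Fin n → F)) →ₗ[F] F :=
  PiTensorProduct.lift
    ((MultilinearMap.mkPiAlgebra F (Fin d) F).compLinearMap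
      (fun i => LinearMap.proj (w i)))

end Coords

/-!
Parameter counting. Every standard coordinate of `g·(t₁,…,t_{m−1}, Σ aₖ ⊗ bₖ)` is a polynomial
`Ψ_p` in the entries of `g`, the coordinates of the free tensors `t_ℓ`, and the coordinates of the
`aₖ` and `bₖ`; after adding one homogenising variable to each of the last two blocks, it is
homogeneous of degree `(1, 1, 2)` in the three blocks. So `Ψ` pulls the forms of degree `D` in the
`S = n^d·m` coordinates back into the span of the monomials of block degree `(D, D, 2D)`.
There are only `m² + Σₖ (n^{|Iₖ|} + n^{d-|Iₖ|}) < n^d / 2` parameters outside the `m - 1` free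
tensors, by the choice of `n`, and this makes the span smaller than the space of forms once
`D = 3S²`. Hence some nonzero form of degree `D` with coefficients in the prime field lies in the
kernel of `Ψ`, i.e. vanishes on the image of the parametrization.
-/

open MvPolynomial Finset

namespace MvPolynomial

variable {R σ τ M : Type*} [CommSemiring R] [AddCommMonoid M]

theorem IsHomogeneous.isWeightedHomogeneous_bind₁ {P : MvPolynomial σ R} {D : ℕ}
    (hP : P.IsHomogeneous D) {w : τ → M} {e : M} {Ψ : σ → MvPolynomial τ R}
    (hΨ : ∀ i, IsWeightedHomogeneous w (Ψ i) e) :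
    IsWeightedHomogeneous w (bind₁ Ψ P) (D • e) := by
  rw [← P.support_sum_monomial_coeff, map_sum]
  refine IsWeightedHomogeneous.sum _ _ _ fun μ hμ => ?_
  rw [bind₁_monomial, ← hP (mem_support_iff.mp hμ), Finsupp.weight_apply]
  refine IsWeightedHomogeneous.C_mul ?_ _
  convert IsWeightedHomogeneous.prod _ _ (fun i => μ i • e) fun i _ => (hΨ i).pow (μ i)
  simp [Finsupp.sum, Finset.sum_smul]

variable {F : Type*} [Field F]

theorem exists_ne_zero_mem_restrictSupport_bind₁_eq_zero {Ψ : σ → MvPolynomial τ F}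
    {s : Set (σ →₀ ℕ)} {t : Set (τ →₀ ℕ)} [Finite s] [Finite t]
    (hΨ : ∀ P ∈ restrictSupport F s, bind₁ Ψ P ∈ restrictSupport F t)
    (hts : Nat.card t < Nat.card s) :
    ∃ P ∈ restrictSupport F s, P ≠ 0 ∧ bind₁ Ψ P = 0 := by
  have := Module.Finite.of_basis (basisRestrictSupport F s)
  have := Module.Finite.of_basis (basisRestrictSupport F t)
  let f := (bind₁ Ψ).toLinearMap.restrict hΨ
  have hker : LinearMap.ker f ≠ ⊥ := LinearMap.ker_ne_bot_of_finrank_lt <| by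
    rwa [Module.finrank_eq_nat_card_basis (basisRestrictSupport F s),
      Module.finrank_eq_nat_card_basis (basisRestrictSupport F t)]
  obtain ⟨⟨P, hPs⟩, hPker, hP0⟩ := Submodule.exists_mem_ne_zero_of_ne_bot hker
  exact ⟨P, hPs, fun h => hP0 (Subtype.ext h), congrArg Subtype.val hPker⟩

end MvPolynomial

section Blocks

variable {α β γ : Type*}

def blockWeight : α ⊕ β ⊕ γ → ℕ × ℕ × ℕ :=
  Sum.elim (fun _ => (1, 0, 0)) (Sum.elim (fun _ => (0, 1, 0)) fun _ => (0, 0, 1))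

noncomputable def blockSplit : (α ⊕ β ⊕ γ →₀ ℕ) ≃ (α →₀ ℕ) × (β →₀ ℕ) × (γ →₀ ℕ) :=
  Finsupp.sumFinsuppEquivProdFinsupp.trans
    (Equiv.prodCongr (Equiv.refl _) Finsupp.sumFinsuppEquivProdFinsupp)

variable [Fintype α] [Fintype β] [Fintype γ]

theorem weight_blockWeight (ν : α ⊕ β ⊕ γ →₀ ℕ) :
    Finsupp.weight blockWeight ν =
      (∑ x, ν (.inl x), ∑ y, ν (.inr (.inl y)), ∑ z, ν (.inr (.inr z))) := by
  rw [Finsupp.weight_apply, Finsupp.sum_fintype _ _ (by simp)]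
  simp [Fintype.sum_sum_type, blockWeight, Prod.ext_iff, Prod.fst_sum, Prod.snd_sum]

variable [DecidableEq α] [DecidableEq β] [DecidableEq γ]

noncomputable def blockBox (a b c : ℕ) : Finset (α ⊕ β ⊕ γ →₀ ℕ) :=
  (univ.finsuppAntidiag a ×ˢ univ.finsuppAntidiag b ×ˢ univ.finsuppAntidiag c).map
    blockSplit.symm.toEmbedding

theorem mem_blockBox_of_weight_eq {a b c : ℕ} {ν : α ⊕ β ⊕ γ →₀ ℕ}
    (h : Finsupp.weight blockWeight ν = (a, b, c)) : ν ∈ blockBox a b c := by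
  rw [weight_blockWeight, Prod.mk.injEq, Prod.mk.injEq] at h
  rw [blockBox, Finset.mem_map_equiv, Equiv.symm_symm]
  simp only [mem_product, mem_finsuppAntidiag, subset_univ, and_true]
  exact h

theorem card_blockBox (a b c : ℕ) :
    #(blockBox (α := α) (β := β) (γ := γ) a b c) =
      (Fintype.card α + a - 1).choose a *
        ((Fintype.card β + b - 1).choose b * (Fintype.card γ + c - 1).choose c) := by
  simp [blockBox, card_finsuppAntidiag_nat_eq_choose]

end Blocks

namespace Nat

theorem pow_mul_choose_le_choose_add {c D k : ℕ} :
    ∀ q, c * (k + q) ≤ D → c ^ q * (D + k).choose k ≤ (D + k + q).choose (k + q)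
  | 0, _ => by simp
  | q + 1, h => by
    have ih := pow_mul_choose_le_choose_add q (le_trans (by gcongr; omega) h)
    have hstep := Nat.add_one_mul_choose_eq (D + k + q) (k + q)
    have hc : c * (k + q + 1) ≤ D + k + q + 1 := by linarith
    have : c * (D + k + q).choose (k + q) ≤ (D + k + (q + 1)).choose (k + (q + 1)) := by
      refine Nat.le_of_mul_le_mul_right ?_ (Nat.succ_pos (k + q))
      calc c * (D + k + q).choose (k + q) * (k + q + 1)
          = c * (k + q + 1) * (D + k + q).choose (k + q) := by ring
        _ ≤ (D + k + q + 1) * (D + k + q).choose (k + q) := by gcongr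
        _ = _ := hstep
    calc c ^ (q + 1) * (D + k).choose k = c * (c ^ q * (D + k).choose k) := by ring
      _ ≤ c * (D + k + q).choose (k + q) := by gcongr
      _ ≤ _ := this

theorem choose_mul_choose_mul_choose_lt {M A B S : ℕ} (hM : 1 ≤ M) (hS : B + 2 * (M + A) < S) :
    (M + 3 * S ^ 2 - 1).choose (3 * S ^ 2) *
        ((B + 1 + 3 * S ^ 2 - 1).choose (3 * S ^ 2) *
          (A + 1 + 2 * (3 * S ^ 2) - 1).choose (2 * (3 * S ^ 2))) <
      (S + 3 * S ^ 2 - 1).choose (3 * S ^ 2) := by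
  set D := 3 * S ^ 2 with hD
  set q := S - 1 - B
  have e₁ : (M + D - 1).choose D = (D + (M - 1)).choose (M - 1) := by
    rw [show M + D - 1 = D + (M - 1) by omega, Nat.choose_symm_add]
  have e₂ : (B + 1 + D - 1).choose D = (D + B).choose B := by
    rw [show B + 1 + D - 1 = D + B by omega, Nat.choose_symm_add]
  have e₃ : (A + 1 + 2 * D - 1).choose (2 * D) = (2 * D + A).choose A := by
    rw [show A + 1 + 2 * D - 1 = 2 * D + A by omega, Nat.choose_symm_add]
  have e₄ : (S + D - 1).choose D = (D + B + q).choose (B + q) := by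
    rw [show S + D - 1 = D + (B + q) by omega, Nat.choose_symm_add, add_assoc]
  have hSS : S ≤ S ^ 2 := by nlinarith
  have hMA : M - 1 + A ≤ S ^ 2 := by omega
  have hBq : B + q ≤ S := by omega
  have h₁ : (D + (M - 1)).choose (M - 1) ≤ ((3 * S) ^ 2) ^ (M - 1) :=
    (Nat.choose_le_pow _ _).trans (Nat.pow_le_pow_left (by rw [hD]; linarith) _)
  have h₃ : (2 * D + A).choose A ≤ ((3 * S) ^ 2) ^ A :=
    (Nat.choose_le_pow _ _).trans (Nat.pow_le_pow_left (by rw [hD]; nlinarith) _)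
  have h₂ : (3 * S) ^ q * (D + B).choose B ≤ (D + B + q).choose (B + q) :=
    pow_mul_choose_le_choose_add q (by rw [hD]; nlinarith)
  have hlt : ((3 * S) ^ 2) ^ (M - 1) * ((3 * S) ^ 2) ^ A < (3 * S) ^ q := by
    rw [← pow_mul, ← pow_mul, ← pow_add]
    exact Nat.pow_lt_pow_right (by omega) (by omega)
  rw [e₁, e₂, e₃, e₄]
  calc (D + (M - 1)).choose (M - 1) * ((D + B).choose B * (2 * D + A).choose A)
      = (D + (M - 1)).choose (M - 1) * (2 * D + A).choose A * (D + B).choose B := by ring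
    _ ≤ ((3 * S) ^ 2) ^ (M - 1) * ((3 * S) ^ 2) ^ A * (D + B).choose B := by gcongr
    _ < (3 * S) ^ q * (D + B).choose B :=
        Nat.mul_lt_mul_of_pos_right hlt (Nat.choose_pos (by omega))
    _ ≤ _ := h₂

end Nat

theorem four_mul_pow_pred_add_two_mul_sq_lt_pow {d m r n : ℕ} (hd : 1 ≤ d) (hm : 1 ≤ m)
    (hn : 4 * ((r : ℝ) + (m : ℝ) ^ ((2 : ℝ) / d)) ≤ n) :
    4 * r * n ^ (d - 1) + 2 * m ^ 2 < n ^ d := by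
  set μ : ℝ := (m : ℝ) ^ ((2 : ℝ) / d)
  have hμ : 0 ≤ μ := by positivity
  have hμd : μ ^ d = (m : ℝ) ^ 2 := by
    rw [← Real.rpow_natCast, ← Real.rpow_mul (Nat.cast_nonneg m),
      div_mul_cancel₀ _ (by positivity), Real.rpow_two]
  have hpow : (4 * μ) ^ (d - 1) ≤ (n : ℝ) ^ (d - 1) := by gcongr; linarith
  have hsplit : ∀ x : ℝ, x ^ d = x * x ^ (d - 1) := fun x => by
    rw [← pow_succ', Nat.sub_add_cancel hd]
  have h4d : (4 : ℝ) ≤ 4 ^ d := le_self_pow₀ (by norm_num) (by omega)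
  have hm2 : (1 : ℝ) ≤ (m : ℝ) ^ 2 := one_le_pow₀ (by exact_mod_cast hm)
  have key : 4 * (r : ℝ) * n ^ (d - 1) + 2 * (m : ℝ) ^ 2 < (n : ℝ) ^ d := by
    calc 4 * (r : ℝ) * n ^ (d - 1) + 2 * (m : ℝ) ^ 2
        < 4 * r * n ^ (d - 1) + 4 ^ d * (m : ℝ) ^ 2 := by nlinarith
      _ = 4 * r * n ^ (d - 1) + 4 * μ * (4 * μ) ^ (d - 1) := by rw [← hsplit, mul_pow, hμd]
      _ ≤ 4 * r * n ^ (d - 1) + 4 * μ * n ^ (d - 1) := by gcongr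
      _ = 4 * (r + μ) * n ^ (d - 1) := by ring
      _ ≤ n * n ^ (d - 1) := by gcongr
      _ = n ^ d := (hsplit _).symm
  exact_mod_cast key

theorem ceil_four_mul_add_rpow_le {d m r : ℕ} (hd : 2 ≤ d) (hm : 1 ≤ m) :
    ⌈4 * ((r : ℝ) + (m : ℝ) ^ ((2 : ℝ) / d))⌉₊ ≤ 5 * (r + m) := by
  have hμ : (m : ℝ) ^ ((2 : ℝ) / d) ≤ m := by
    refine Real.rpow_le_self_of_one_le (by exact_mod_cast hm) ?_
    rw [div_le_one (by positivity)]
    exact_mod_cast hd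
  rw [Nat.ceil_le]
  push_cast
  have : (1 : ℝ) ≤ m := by exact_mod_cast hm
  linarith

theorem Real.logb_natCast_le_mul_logb {N Y k : ℕ} (hY : 1 ≤ Y) (hN : N ≤ Y ^ k) :
    Real.logb 2 N ≤ k * Real.logb 2 Y := by
  rcases N.eq_zero_or_pos with rfl | hN0
  · simpa using mul_nonneg (Nat.cast_nonneg k) (Real.logb_nonneg one_lt_two (by exact_mod_cast hY))
  · rw [← Real.logb_pow]
    exact Real.logb_le_logb_of_le one_lt_two (by exact_mod_cast hN0) (by exact_mod_cast hN)

theorem three_mul_sq_le_pow {d m r n : ℕ} (hn : n ≤ 5 * (r + m)) (hr : 3 * 5 ^ (2 * d) ≤ r) :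
    3 * (n ^ d * m) ^ 2 ≤ (r + m) ^ (2 * d + 3) :=
  calc 3 * (n ^ d * m) ^ 2 ≤ 3 * (5 ^ d * (r + m) ^ d * (r + m)) ^ 2 := by
        rw [← mul_pow]; gcongr; omega
    _ = 3 * 5 ^ (2 * d) * (r + m) ^ (2 * d + 2) := by ring
    _ ≤ (r + m) * (r + m) ^ (2 * d + 2) := by gcongr; omega
    _ = (r + m) ^ (2 * d + 3) := by ring

section Coordinates

variable (F : Type*) [Field F] {n : ℕ}

noncomputable def tensorCoord {ι : Type*} [Fintype ι] (w : ι → Fin n) :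
    (⨂[F] _ : ι, (Fin n → F)) →ₗ[F] F :=
  PiTensorProduct.lift
    ((MultilinearMap.mkPiAlgebra F ι F).compLinearMap fun i => LinearMap.proj (w i))

@[simp]
theorem tensorCoord_tprod {ι : Type*} [Fintype ι] (w : ι → Fin n) (f : ι → Fin n → F) :
    tensorCoord F w (tprod F f) = ∏ i, f i (w i) := by
  simp [tensorCoord]

theorem stdCoord_eq_tensorCoord (d : ℕ) (w : Fin d → Fin n) :
    stdCoord F d n w = tensorCoord F w :=
  rfl

theorem partMul_tprod {d : ℕ} (W : Fin d → Type*) [∀ i, AddCommGroup (W i)]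
    [∀ i, Module F (W i)] (I : Finset (Fin d)) (v : ∀ i : {x // x ∈ I}, W i)
    (u : ∀ i : {x // x ∉ I}, W i) :
    partMul F W I (tprod F v) (tprod F u) = tprod F (combineVec W I v u) := by
  simp [partMul, partMulOuter, partMulInner]

theorem stdCoord_partMul {d : ℕ} (I : Finset (Fin d)) (w : Fin d → Fin n)
    (a : ⨂[F] _ : {x // x ∈ I}, (Fin n → F)) (b : ⨂[F] _ : {x // x ∉ I}, (Fin n → F)) :
    stdCoord F d n w (partMul F (fun _ => Fin n → F) I a b) =
      tensorCoord F (fun i : {x // x ∈ I} => w i) a *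
        tensorCoord F (fun i : {x // x ∉ I} => w i) b := by
  classical
  suffices (partMul F (fun _ => Fin n → F) I).compr₂ (stdCoord F d n w) =
      (LinearMap.mul F F).compl₁₂ (tensorCoord F fun i : {x // x ∈ I} => w i)
        (tensorCoord F fun i : {x // x ∉ I} => w i) from
    congrArg (fun f => f a b) this
  refine PiTensorProduct.ext (MultilinearMap.ext fun v => ?_)
  refine PiTensorProduct.ext (MultilinearMap.ext fun u => ?_)
  simp only [LinearMap.compMultilinearMap_apply, LinearMap.compr₂_apply, partMul_tprod,
    LinearMap.compl₁₂_apply, LinearMap.mul_apply', stdCoord_eq_tensorCoord, tensorCoord_tprod]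
  rw [← Fintype.prod_subtype_mul_prod_subtype (· ∈ I)]
  congr 1
  · exact Finset.prod_congr (by congr; exact Subsingleton.elim _ _) fun i _ => by
      simp only [combineVec, dif_pos i.2]
  · exact Finset.prod_congr rfl fun i _ => by simp only [combineVec, dif_neg i.2]

end Coordinates

theorem MvPolynomial.mem_restrictSupport_finsuppAntidiag_iff {R σ : Type*} [CommSemiring R]
    [Fintype σ] [DecidableEq σ] {P : MvPolynomial σ R} {D : ℕ} :
    P ∈ restrictSupport R ↑(univ.finsuppAntidiag D : Finset (σ →₀ ℕ)) ↔ P.IsHomogeneous D := by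
  simp [mem_restrictSupport_iff, Set.subset_def, IsHomogeneous, IsWeightedHomogeneous,
    Finsupp.weight_apply, Finsupp.sum_fintype]

section Parametrization

variable (d m n r : ℕ) (I : Fin r → Finset (Fin d)) (ℓ₀ : Fin m)

abbrev FreeCoord : Type := {ℓ : Fin m // ℓ ≠ ℓ₀} × (Fin d → Fin n)

abbrev PartCoord : Type := Σ k : Fin r, ({x // x ∈ I k} → Fin n) ⊕ ({x // x ∉ I k} → Fin n)

/-- The parameters: the entries of `g`, the coordinates of the `t_ℓ` with `ℓ ≠ ℓ₀`, and the
coordinates of the `aₖ` and `bₖ`. Each `none` is a homogenising variable, evaluated at `1`. -/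
abbrev ParamVar : Type :=
  (Fin m × Fin m) ⊕ Option (FreeCoord d m n ℓ₀) ⊕ Option (PartCoord d n r I)

noncomputable def param (R : Type*) [CommSemiring R] (p : (Fin d → Fin n) × Fin m) :
    MvPolynomial (ParamVar d m n r I ℓ₀) R :=
  ∑ ℓ, X (.inl (p.2, ℓ)) *
    if h : ℓ = ℓ₀ then
      X (.inr (.inl none)) * ∑ k, X (.inr (.inr (some ⟨k, .inl fun i => p.1 i⟩))) *
        X (.inr (.inr (some ⟨k, .inr fun i => p.1 i⟩)))
    else X (.inr (.inl (some (⟨ℓ, h⟩, p.1)))) * X (.inr (.inr none)) ^ 2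

theorem isWeightedHomogeneous_param (R : Type*) [CommSemiring R] (p : (Fin d → Fin n) × Fin m) :
    IsWeightedHomogeneous blockWeight (param d m n r I ℓ₀ R p) (1, 1, 2) := by
  refine IsWeightedHomogeneous.sum _ _ _ fun ℓ _ => ?_
  have hX := isWeightedHomogeneous_X R (blockWeight : ParamVar d m n r I ℓ₀ → ℕ × ℕ × ℕ)
  rw [show ((1, 1, 2) : ℕ × ℕ × ℕ) = (1, 0, 0) + ((0, 1, 0) + (0, 0, 1) + (0, 0, 1)) from rfl]
  refine (hX _).mul ?_
  split_ifs with h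
  · rw [add_assoc]
    refine (hX _).mul (IsWeightedHomogeneous.sum _ _ _ fun k _ => (hX _).mul (hX _))
  · exact (hX _).mul ((hX _).pow 2)

end Parametrization

section Evaluation

variable {d m n r : ℕ} {I : Fin r → Finset (Fin d)} {ℓ₀ : Fin m} {K : Type*} [Field K]

noncomputable def paramPoint (g : Fin m → Fin m → K) (t : Fin m → ⨂[K] _ : Fin d, (Fin n → K))
    (a : ∀ k, ⨂[K] _ : {x // x ∈ I k}, (Fin n → K))
    (b : ∀ k, ⨂[K] _ : {x // x ∉ I k}, (Fin n → K)) : ParamVar d m n r I ℓ₀ → K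
  | .inl (j, ℓ) => g j ℓ
  | .inr (.inl none) => 1
  | .inr (.inl (some (ℓ, w))) => stdCoord K d n w (t ℓ)
  | .inr (.inr none) => 1
  | .inr (.inr (some ⟨k, .inl u⟩)) => tensorCoord K u (a k)
  | .inr (.inr (some ⟨k, .inr u⟩)) => tensorCoord K u (b k)

theorem aeval_param {R : Type*} [CommSemiring R] [Algebra R K] (g : Fin m → Fin m → K)
    (t : Fin m → ⨂[K] _ : Fin d, (Fin n → K)) (a : ∀ k, ⨂[K] _ : {x // x ∈ I k}, (Fin n → K))
    (b : ∀ k, ⨂[K] _ : {x // x ∉ I k}, (Fin n → K))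
    (ht : t ℓ₀ = ∑ k, partMul K (fun _ => Fin n → K) (I k) (a k) (b k))
    (p : (Fin d → Fin n) × Fin m) :
    aeval (paramPoint g t a b) (param d m n r I ℓ₀ R p) =
      stdCoord K d n p.1 (∑ ℓ, g p.2 ℓ • t ℓ) := by
  simp only [param, map_sum, map_mul, aeval_X, smul_eq_mul, map_smul]
  refine Finset.sum_congr rfl fun ℓ _ => ?_
  split_ifs with h
  · subst h
    simp [paramPoint, ht, stdCoord_partMul]
  · simp [paramPoint]

end Evaluation

section Counting

variable {d m n r : ℕ} {I : Fin r → Finset (Fin d)}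

theorem card_partCoord_le (hI : ∀ k, (I k).Nonempty ∧ I k ≠ univ) (hn : 0 < n) :
    Fintype.card (PartCoord d n r I) ≤ 2 * r * n ^ (d - 1) := by
  rw [Fintype.card_sigma]
  calc ∑ k, Fintype.card (({x // x ∈ I k} → Fin n) ⊕ ({x // x ∉ I k} → Fin n))
      ≤ ∑ _k : Fin r, 2 * n ^ (d - 1) := Finset.sum_le_sum fun k _ => by
        obtain ⟨⟨x, hx⟩, hne⟩ := hI k
        obtain ⟨y, hy⟩ : ∃ y, y ∉ I k := by
          by_contra! h
          exact hne (Finset.eq_univ_iff_forall.2 h)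
        have h₁ := Fintype.card_subtype_lt (p := (· ∈ I k)) hy
        have h₂ := Fintype.card_subtype_lt (p := (· ∉ I k)) (not_not.2 hx)
        rw [Fintype.card_fin] at h₁ h₂
        rw [Fintype.card_sum, Fintype.card_fun, Fintype.card_fun, Fintype.card_fin, two_mul]
        gcongr <;> omega
    _ = 2 * r * n ^ (d - 1) := by simp; ring

theorem card_freeCoord_add_two_mul_lt (ℓ₀ : Fin m) (hd : 1 ≤ d) (hm : 1 ≤ m)
    (hI : ∀ k, (I k).Nonempty ∧ I k ≠ univ) (hn : 4 * ((r : ℝ) + (m : ℝ) ^ ((2 : ℝ) / d)) ≤ n) :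
    Fintype.card (FreeCoord d m n ℓ₀) +
        2 * (Fintype.card (Fin m × Fin m) + Fintype.card (PartCoord d n r I)) <
      Fintype.card ((Fin d → Fin n) × Fin m) := by
  have key := four_mul_pow_pred_add_two_mul_sq_lt_pow hd hm hn
  have hn₀ : 0 < n := Nat.pos_of_ne_zero fun h => by
    subst h
    simp [zero_pow (by omega : d ≠ 0)] at key
  have hA := card_partCoord_le hI hn₀
  have hfree : Fintype.card {ℓ : Fin m // ℓ ≠ ℓ₀} + 1 = m := by
    simp [Fintype.card_subtype_compl]; omega
  simp only [Fintype.card_prod, Fintype.card_fun, Fintype.card_fin]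
  nlinarith

end Counting

theorem exists_isHomogeneous_bind₁_param_eq_zero {d m n r : ℕ} {I : Fin r → Finset (Fin d)}
    (F : Type*) [Field F] (ℓ₀ : Fin m) (hd : 1 ≤ d) (hm : 1 ≤ m)
    (hI : ∀ k, (I k).Nonempty ∧ I k ≠ univ) (hn : 4 * ((r : ℝ) + (m : ℝ) ^ ((2 : ℝ) / d)) ≤ n) :
    ∃ P : MvPolynomial ((Fin d → Fin n) × Fin m) F, P ≠ 0 ∧
      P.IsHomogeneous (3 * (n ^ d * m) ^ 2) ∧ bind₁ (param d m n r I ℓ₀ F) P = 0 := by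
  classical
  have hS : Fintype.card ((Fin d → Fin n) × Fin m) = n ^ d * m := by simp
  rw [← hS]
  set D := 3 * Fintype.card ((Fin d → Fin n) × Fin m) ^ 2
  have hΨ : ∀ P ∈ restrictSupport F
      ↑(univ.finsuppAntidiag D : Finset ((Fin d → Fin n) × Fin m →₀ ℕ)),
      bind₁ (param d m n r I ℓ₀ F) P ∈
        restrictSupport F ↑(blockBox D D (2 * D) : Finset (ParamVar d m n r I ℓ₀ →₀ ℕ)) := by
    intro P hP μ hμ
    have hhom := (mem_restrictSupport_finsuppAntidiag_iff.1 hP).isWeightedHomogeneous_bind₁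
      (isWeightedHomogeneous_param d m n r I ℓ₀ F)
    exact mem_blockBox_of_weight_eq ((hhom (mem_support_iff.1 hμ)).trans (by simp [mul_comm]))
  have hcard : Nat.card ↑↑(blockBox D D (2 * D) : Finset (ParamVar d m n r I ℓ₀ →₀ ℕ)) <
      Nat.card ↑↑(univ.finsuppAntidiag D : Finset ((Fin d → Fin n) × Fin m →₀ ℕ)) := by
    simp only [Nat.card_eq_fintype_card, Fintype.card_coe, card_blockBox,
      card_finsuppAntidiag_nat_eq_choose, card_univ, Fintype.card_option]
    refine Nat.choose_mul_choose_mul_choose_lt ?_ (card_freeCoord_add_two_mul_lt ℓ₀ hd hm hI hn)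
    simpa using Nat.mul_le_mul hm hm
  obtain ⟨P, hPs, hP0, hP⟩ := exists_ne_zero_mem_restrictSupport_bind₁_eq_zero hΨ hcard
  exact ⟨P, hP0, mem_restrictSupport_finsuppAntidiag_iff.1 hPs, hP⟩

/-- Fix `d ≥ 2`. There exist constants `C(d)` and `r₀(d)` such that: for
every algebraically closed field `K̄`, `m ≥ 1`, `r ≥ r₀(d)`, with
`n := ⌈4(r + m^{2/d})⌉`, and every choice of proper nonempty subsets `I₁,…,I_r` of `[d]`,
there is a nonzero polynomial `F` in the standard coordinates on `((K̄ⁿ)^{⊗d})^m`, with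
coefficients in the prime field and `log₂ (deg F) ≤ C(d)·log₂(r+m)`, vanishing at every
tuple `g·(t₁,…,t_{m-1}, Σ_{i=1}^r a_i ⊗ b_i)` with `g ∈ K̄^{m×m}`,
`a_i ∈ (K̄ⁿ)^{⊗I_i}`, `b_i ∈ (K̄ⁿ)^{⊗I_i^c}`. -/
theorem exists_low_degree_equation_for_parametrization (d : ℕ) (hd : 2 ≤ d) :
    ∃ (C : ℝ) (r₀ : ℕ), 0 < C ∧
      ∀ (Kbar : Type*) [Field Kbar] [IsAlgClosed Kbar]
        (m r : ℕ) (hm : 1 ≤ m) (hr : r₀ ≤ r) (n : ℕ),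
        n = ⌈4 * ((r : ℝ) + (m : ℝ) ^ ((2 : ℝ) / (d : ℝ)))⌉₊ →
        ∀ I : Fin r → Finset (Fin d), (∀ k, (I k).Nonempty ∧ I k ≠ Finset.univ) →
          ∃ P : MvPolynomial ((Fin d → Fin n) × Fin m) Kbar, P ≠ 0 ∧
            (∀ mo : ((Fin d → Fin n) × Fin m) →₀ ℕ,
              MvPolynomial.coeff mo P ∈ (⊥ : Subfield Kbar)) ∧
            Real.logb 2 (P.totalDegree : ℝ) ≤ C * Real.logb 2 ((r : ℝ) + (m : ℝ)) ∧
            ∀ (g : Fin m → Fin m → Kbar)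
              (t : Fin m → ⨂[Kbar] _ : Fin d, (Fin n → Kbar))
              (a : ∀ k : Fin r, ⨂[Kbar] i : {x : Fin d // x ∈ I k}, (Fin n → Kbar))
              (b : ∀ k : Fin r, ⨂[Kbar] i : {x : Fin d // x ∉ I k}, (Fin n → Kbar)),
              t ⟨m - 1, by omega⟩ =
                  ∑ k, partMul Kbar (fun _ : Fin d => Fin n → Kbar) (I k) (a k) (b k) →
                MvPolynomial.eval
                  (fun p => stdCoord Kbar d n p.1 (∑ ℓ, g p.2 ℓ • t ℓ)) P = 0 := by
  refine ⟨2 * d + 3, 3 * 5 ^ (2 * d), by positivity, ?_⟩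
  intro Kbar _ _ m r hm hr n hn I hI
  let ℓ₀ : Fin m := ⟨m - 1, by omega⟩
  obtain ⟨P, hP0, hPhom, hPΨ⟩ :=
    exists_isHomogeneous_bind₁_param_eq_zero (⊥ : Subfield Kbar) ℓ₀ (by omega) hm hI
      (hn ▸ Nat.le_ceil _)
  let ι := algebraMap (⊥ : Subfield Kbar) Kbar
  have hmap0 : map ι P ≠ 0 := (map_injective ι ι.injective).ne_iff' (map_zero _) |>.2 hP0
  refine ⟨map ι P, hmap0, fun μ => by rw [coeff_map]; exact (coeff μ P).2, ?_, ?_⟩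
  · rw [(hPhom.map ι).totalDegree hmap0]
    exact_mod_cast Real.logb_natCast_le_mul_logb (by omega)
      (three_mul_sq_le_pow (hn ▸ ceil_four_mul_add_rpow_le hd hm) hr)
  · intro g t a b ht
    have hpoint : (fun p => stdCoord Kbar d n p.1 (∑ ℓ, g p.2 ℓ • t ℓ)) =
        fun p => aeval (paramPoint g t a b) (param d m n r I ℓ₀ (⊥ : Subfield Kbar) p) :=
      funext fun p => (aeval_param g t a b ht p).symm
    rw [hpoint, eval_map, ← aeval_def, ← aeval_bind₁, hPΨ, map_zero]
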